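/- For all n ≥ 0 and all x, a, q, the big q-Hermite polynomials satisfy h_n(x|a,q) = ∑_{k=0}^{n} [n choose k]_q (-1)^k q^{k(k-1)/2} a^k h_{n-k}(x|q), and conversely h_n(x|q) = ∑_{k=0}^{n} [n choose k]_q a^k h_{n-k}(x|a,q). -/
import Mathlib


/-- The Gaussian (q-)binomial coefficient, defined via the q-Pascal rule. -/
def gaussBinom (q : ℂ) : ℕ → ℕ → ℂ
  | _, 0 => 1
  | 0, _ + 1 => 0
  | n + 1, k + 1 => gaussBinom q n k + q ^ (k + 1) * gaussBinom q n (k + 1)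

/-- The continuous q-Hermite polynomials. -/
def qHermite (q x : ℂ) : ℕ → ℂ
  | 0 => 1
  | 1 => 2 * x
  | n + 2 => 2 * x * qHermite q x (n + 1) - (1 - q ^ (n + 1)) * qHermite q x n

/-- The big continuous q-Hermite polynomials:
`(2x - aq^n) h_n(x|a,q) = h_{n+1}(x|a,q) + (1-q^n) h_{n-1}(x|a,q)`. -/
def bigQHermite (q a x : ℂ) : ℕ → ℂ
  | 0 => 1
  | 1 => 2 * x - a
  | n + 2 => (2 * x - a * q ^ (n + 1)) * bigQHermite q a x (n + 1)
      - (1 - q ^ (n + 1)) * bigQHermite q a x n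

lemma gB_base (q : ℂ) (n : ℕ) : gaussBinom q n 0 = 1 := by
  cases n <;> simp [gaussBinom]

lemma gB_zero (q : ℂ) : ∀ n k : ℕ, n < k → gaussBinom q n k = 0 := by
  intro n
  induction n with
  | zero =>
    intro k hk
    match k, hk with
    | k + 1, _ => simp [gaussBinom]
  | succ n ih =>
    intro k hk
    match k, hk with
    | k + 1, hk =>
      show gaussBinom q (n + 1) (k + 1) = 0
      rw [show gaussBinom q (n + 1) (k + 1)
          = gaussBinom q n k + q ^ (k + 1) * gaussBinom q n (k + 1) from rfl,
        ih k (by omega), ih (k + 1) (by omega)]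
      ring

lemma pascal2 (q : ℂ) : ∀ n k : ℕ,
    gaussBinom q (n + 1) (k + 1) = q ^ (n - k) * gaussBinom q n k + gaussBinom q n (k + 1) := by
  intro n
  induction n with
  | zero =>
    intro k
    cases k with
    | zero => simp [gaussBinom]
    | succ m => simp [gaussBinom]
  | succ n ih =>
    intro k
    cases k with
    | zero =>
      have e1 : gaussBinom q (n + 2) 1 = gaussBinom q (n + 1) 0 + q ^ 1 * gaussBinom q (n + 1) 1 := rfl
      have e2 : gaussBinom q (n + 1) 1 = gaussBinom q n 0 + q ^ 1 * gaussBinom q n 1 := rfl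
      conv_lhs => rw [e1, ih 0]
      rw [e2]
      simp only [Nat.sub_zero]
      rw [pow_succ]
      simp only [gB_base]
      ring
    | succ m =>
      have e1 : gaussBinom q (n + 2) (m + 2)
          = gaussBinom q (n + 1) (m + 1) + q ^ (m + 2) * gaussBinom q (n + 1) (m + 2) := rfl
      have e2 : gaussBinom q (n + 1) (m + 1) = gaussBinom q n m + q ^ (m + 1) * gaussBinom q n (m + 1) := rfl
      have e3 : gaussBinom q (n + 1) (m + 2) = gaussBinom q n (m + 1) + q ^ (m + 2) * gaussBinom q n (m + 2) := rfl
      conv_lhs => rw [e1, ih m, ih (m + 1)]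
      rw [Nat.succ_sub_succ, e2, e3]
      by_cases h : m + 1 ≤ n
      · have f1 : q ^ (m + 2) * q ^ (n - (m + 1)) = q ^ (n + 1) := by
          rw [← pow_add]; congr 1; omega
        have f2 : q ^ (n - m) * q ^ (m + 1) = q ^ (n + 1) := by
          rw [← pow_add]; congr 1; omega
        linear_combination gaussBinom q n (m + 1) * (f1 - f2)
      · rw [gB_zero q n (m + 1) (by omega), gB_zero q n (m + 2) (by omega)]
        ring

lemma idA (q : ℂ) (n k : ℕ) :
    gaussBinom q (n + 1) k * (1 - q ^ (n + 1 - k)) = (1 - q ^ (n + 1)) * gaussBinom q n k := by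
  cases k with
  | zero => rw [gB_base, gB_base]; simp
  | succ m =>
    by_cases h : m ≤ n
    · have h1 : gaussBinom q (n + 1) (m + 1)
        = gaussBinom q n m + q ^ (m + 1) * gaussBinom q n (m + 1) := rfl
      have heq := h1.symm.trans (pascal2 q n m)
      have e : q ^ (m + 1) * q ^ (n - m) = q ^ (n + 1) := by
        rw [← pow_add]; congr 1; omega
      have hs : n + 1 - (m + 1) = n - m := by omega
      rw [hs, h1]
      linear_combination heq - gaussBinom q n (m + 1) * e
    · rw [gB_zero q (n + 1) (m + 1) (by omega), gB_zero q n (m + 1) (by omega)]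
      ring

lemma H_step (q x : ℂ) (m : ℕ) :
    qHermite q x (m + 1) = 2 * x * qHermite q x m - (1 - q ^ m) * qHermite q x (m - 1) := by
  cases m with
  | zero => simp [qHermite]
  | succ k => rfl

lemma B_step (q a x : ℂ) (m : ℕ) :
    bigQHermite q a x (m + 1) = (2 * x - a * q ^ m) * bigQHermite q a x m
      - (1 - q ^ m) * bigQHermite q a x (m - 1) := by
  cases m with
  | zero => simp [bigQHermite]
  | succ k => rfl

lemma ediv (i : ℕ) : (i + 1) * i / 2 = i * (i - 1) / 2 + i := by
  have h : (i + 1) * i = i * (i - 1) + 2 * i := by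
    cases i with
    | zero => rfl
    | succ j => simp only [Nat.add_sub_cancel]; ring
  rw [h, Nat.add_mul_div_left _ _ (by norm_num : (0:ℕ) < 2)]

noncomputable def Sfun (q a x : ℂ) (n : ℕ) : ℂ :=
  ∑ k ∈ Finset.range (n + 1),
    gaussBinom q n k * (-1) ^ k * q ^ (k * (k - 1) / 2) * a ^ k * qHermite q x (n - k)

noncomputable def Wfun (q a x : ℂ) (n : ℕ) : ℂ :=
  ∑ k ∈ Finset.range (n + 1),
    gaussBinom q n k * a ^ k * bigQHermite q a x (n - k)

lemma S_rec (q a x : ℂ) (n : ℕ) :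
    Sfun q a x (n + 2) = (2 * x - a * q ^ (n + 1)) * Sfun q a x (n + 1)
      - (1 - q ^ (n + 1)) * Sfun q a x n := by
  have hterm : ∀ i ∈ Finset.range (n + 2),
      gaussBinom q (n + 2) (i + 1) * (-1) ^ (i + 1) * q ^ ((i + 1) * (i + 1 - 1) / 2)
          * a ^ (i + 1) * qHermite q x (n + 2 - (i + 1))
      = -(a * q ^ (n + 1)) * (gaussBinom q (n + 1) i * (-1) ^ i * q ^ (i * (i - 1) / 2)
            * a ^ i * qHermite q x (n + 1 - i))
        + gaussBinom q (n + 1) (i + 1) * (-1) ^ (i + 1) * q ^ ((i + 1) * (i + 1 - 1) / 2)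
            * a ^ (i + 1) * qHermite q x (n + 2 - (i + 1)) := by
    intro i hi
    have hi' : i ≤ n + 1 := by simpa [Nat.lt_succ_iff] using hi
    have p2 : gaussBinom q (n + 2) (i + 1)
        = q ^ (n + 1 - i) * gaussBinom q (n + 1) i + gaussBinom q (n + 1) (i + 1) :=
      pascal2 q (n + 1) i
    have e2 : n + 2 - (i + 1) = n + 1 - i := by omega
    have e3 : q ^ (n + 1 - i) * q ^ ((i + 1) * (i + 1 - 1) / 2)
        = q ^ (n + 1) * q ^ (i * (i - 1) / 2) := by
      rw [← pow_add, ← pow_add]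
      congr 1
      rw [Nat.add_sub_cancel, ediv i]
      omega
    rw [p2, e2]
    linear_combination ((-1 : ℂ) ^ (i + 1) * a ^ (i + 1) * qHermite q x (n + 1 - i)
      * gaussBinom q (n + 1) i) * e3
  have step1 : Sfun q a x (n + 2)
      = -(a * q ^ (n + 1)) * Sfun q a x (n + 1)
        + ∑ k ∈ Finset.range (n + 2 + 1),
            gaussBinom q (n + 1) k * (-1) ^ k * q ^ (k * (k - 1) / 2) * a ^ k
              * qHermite q x (n + 2 - k) := by
    unfold Sfun
    rw [Finset.sum_range_succ' (fun k => gaussBinom q (n + 2) k * (-1) ^ k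
          * q ^ (k * (k - 1) / 2) * a ^ k * qHermite q x (n + 2 - k)) (n + 2),
        Finset.sum_range_succ' (fun k => gaussBinom q (n + 1) k * (-1) ^ k
          * q ^ (k * (k - 1) / 2) * a ^ k * qHermite q x (n + 2 - k)) (n + 2),
        Finset.sum_congr rfl hterm, Finset.sum_add_distrib, ← Finset.mul_sum,
        gB_base q (n + 2), gB_base q (n + 1)]
    ring
  have hterm2 : ∀ k ∈ Finset.range (n + 2),
      gaussBinom q (n + 1) k * (-1) ^ k * q ^ (k * (k - 1) / 2) * a ^ k
          * qHermite q x (n + 2 - k)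
      = 2 * x * (gaussBinom q (n + 1) k * (-1) ^ k * q ^ (k * (k - 1) / 2) * a ^ k
            * qHermite q x (n + 1 - k))
        - (1 - q ^ (n + 1)) * (gaussBinom q n k * (-1) ^ k * q ^ (k * (k - 1) / 2) * a ^ k
            * qHermite q x (n - k)) := by
    intro k hk
    have hk' : k ≤ n + 1 := by simpa [Nat.lt_succ_iff] using hk
    have hH := H_step q x (n + 1 - k)
    rw [show n + 1 - k - 1 = n - k from by omega] at hH
    rw [show n + 2 - k = n + 1 - k + 1 from by omega, hH]
    linear_combination (-((-1 : ℂ) ^ k * q ^ (k * (k - 1) / 2) * a ^ k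
      * qHermite q x (n - k))) * idA q n k
  have step2 : ∑ k ∈ Finset.range (n + 2 + 1),
        gaussBinom q (n + 1) k * (-1) ^ k * q ^ (k * (k - 1) / 2) * a ^ k
          * qHermite q x (n + 2 - k)
      = 2 * x * Sfun q a x (n + 1) - (1 - q ^ (n + 1)) * Sfun q a x n := by
    rw [Finset.sum_range_succ, gB_zero q (n + 1) (n + 2) (by omega),
        Finset.sum_congr rfl hterm2, Finset.sum_sub_distrib, ← Finset.mul_sum, ← Finset.mul_sum,
        Finset.sum_range_succ (fun k => gaussBinom q n k * (-1) ^ k * q ^ (k * (k - 1) / 2)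
          * a ^ k * qHermite q x (n - k)) (n + 1),
        gB_zero q n (n + 1) (by omega)]
    unfold Sfun
    ring
  rw [step1, step2]
  ring

lemma W_rec (q a x : ℂ) (n : ℕ) :
    Wfun q a x (n + 2) = 2 * x * Wfun q a x (n + 1) - (1 - q ^ (n + 1)) * Wfun q a x n := by
  have hterm : ∀ i ∈ Finset.range (n + 2),
      gaussBinom q (n + 2) (i + 1) * a ^ (i + 1) * bigQHermite q a x (n + 2 - (i + 1))
      = q ^ (n + 1 - i) * gaussBinom q (n + 1) i * a ^ (i + 1) * bigQHermite q a x (n + 1 - i)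
        + gaussBinom q (n + 1) (i + 1) * a ^ (i + 1) * bigQHermite q a x (n + 2 - (i + 1)) := by
    intro i hi
    have p2 : gaussBinom q (n + 2) (i + 1)
        = q ^ (n + 1 - i) * gaussBinom q (n + 1) i + gaussBinom q (n + 1) (i + 1) :=
      pascal2 q (n + 1) i
    have e2 : n + 2 - (i + 1) = n + 1 - i := by omega
    rw [p2, e2]
    ring
  have step1 : Wfun q a x (n + 2)
      = (∑ i ∈ Finset.range (n + 2),
          q ^ (n + 1 - i) * gaussBinom q (n + 1) i * a ^ (i + 1) * bigQHermite q a x (n + 1 - i))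
        + ∑ k ∈ Finset.range (n + 2 + 1),
            gaussBinom q (n + 1) k * a ^ k * bigQHermite q a x (n + 2 - k) := by
    unfold Wfun
    rw [Finset.sum_range_succ' (fun k => gaussBinom q (n + 2) k * a ^ k
          * bigQHermite q a x (n + 2 - k)) (n + 2),
        Finset.sum_range_succ' (fun k => gaussBinom q (n + 1) k * a ^ k
          * bigQHermite q a x (n + 2 - k)) (n + 2),
        Finset.sum_congr rfl hterm, Finset.sum_add_distrib,
        gB_base q (n + 2), gB_base q (n + 1)]
    ring
  have hterm2 : ∀ k ∈ Finset.range (n + 2),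
      gaussBinom q (n + 1) k * a ^ k * bigQHermite q a x (n + 2 - k)
      = 2 * x * (gaussBinom q (n + 1) k * a ^ k * bigQHermite q a x (n + 1 - k))
        - q ^ (n + 1 - k) * gaussBinom q (n + 1) k * a ^ (k + 1) * bigQHermite q a x (n + 1 - k)
        - (1 - q ^ (n + 1)) * (gaussBinom q n k * a ^ k * bigQHermite q a x (n - k)) := by
    intro k hk
    have hk' : k ≤ n + 1 := by simpa [Nat.lt_succ_iff] using hk
    have hB := B_step q a x (n + 1 - k)
    rw [show n + 1 - k - 1 = n - k from by omega] at hB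
    rw [show n + 2 - k = n + 1 - k + 1 from by omega, hB]
    linear_combination (-(a ^ k * bigQHermite q a x (n - k))) * idA q n k
  have step2 : ∑ k ∈ Finset.range (n + 2 + 1),
        gaussBinom q (n + 1) k * a ^ k * bigQHermite q a x (n + 2 - k)
      = 2 * x * Wfun q a x (n + 1)
        - (∑ i ∈ Finset.range (n + 2),
            q ^ (n + 1 - i) * gaussBinom q (n + 1) i * a ^ (i + 1) * bigQHermite q a x (n + 1 - i))
        - (1 - q ^ (n + 1)) * Wfun q a x n := by
    rw [Finset.sum_range_succ, gB_zero q (n + 1) (n + 2) (by omega),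
        Finset.sum_congr rfl hterm2, Finset.sum_sub_distrib, Finset.sum_sub_distrib,
        ← Finset.mul_sum, ← Finset.mul_sum,
        Finset.sum_range_succ (fun k => gaussBinom q n k * a ^ k
          * bigQHermite q a x (n - k)) (n + 1),
        gB_zero q n (n + 1) (by omega)]
    unfold Wfun
    ring
  rw [step1, step2]
  ring

lemma connection_pair (q a x : ℂ) : ∀ n : ℕ,
    ((bigQHermite q a x n = Sfun q a x n) ∧ (qHermite q x n = Wfun q a x n)) ∧
    ((bigQHermite q a x (n + 1) = Sfun q a x (n + 1)) ∧
      (qHermite q x (n + 1) = Wfun q a x (n + 1))) := by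
  intro n
  induction n with
  | zero =>
    refine ⟨⟨?_, ?_⟩, ?_, ?_⟩ <;>
      simp [Sfun, Wfun, Finset.sum_range_succ, gaussBinom, qHermite, bigQHermite] <;> ring
  | succ m ih =>
    obtain ⟨⟨hB0, hH0⟩, hB1, hH1⟩ := ih
    refine ⟨⟨hB1, hH1⟩, ?_, ?_⟩
    · rw [show bigQHermite q a x (m + 2)
          = (2 * x - a * q ^ (m + 1)) * bigQHermite q a x (m + 1)
            - (1 - q ^ (m + 1)) * bigQHermite q a x m from rfl,
        hB1, hB0, ← S_rec]
    · rw [show qHermite q x (m + 2)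
          = 2 * x * qHermite q x (m + 1) - (1 - q ^ (m + 1)) * qHermite q x m from rfl,
        hH1, hH0, ← W_rec]

/-- Connection coefficients between big q-Hermite and q-Hermite polynomials. -/
theorem bigQHermite_qHermite_connection (n : ℕ) (x a q : ℂ) :
    (bigQHermite q a x n =
      ∑ k ∈ Finset.range (n + 1),
        gaussBinom q n k * (-1) ^ k * q ^ (k * (k - 1) / 2) * a ^ k *
          qHermite q x (n - k)) ∧
    (qHermite q x n =
      ∑ k ∈ Finset.range (n + 1),
        gaussBinom q n k * a ^ k * bigQHermite q a x (n - k)) := by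
  obtain ⟨⟨h1, h2⟩, -⟩ := connection_pair q a x n
  exact ⟨by simpa [Sfun] using h1, by simpa [Wfun] using h2⟩
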